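/- The co-volume function cov is smooth (C^∞) on the open set 𝓛 ⊂ ℝ⁶, and for every l ∈ 𝓛 the kernel of the Hessian quadratic form of cov at l is exactly the 4-dimensional subspace ℝ̂⁴, and the Hessian of cov at l is positive definite when restricted to the orthogonal complement of ℝ̂⁴ in ℝ⁶ (with respect to the standard inner product). -/

import Mathlib

noncomputable section

open Real Set Filter

/-- The generalized Euclidean triangle angle `aᵢ(x)` opposite the side of length `x i`,
for a generalized triangle with (positive) side lengths `x 0, x 1, x 2`:
it is `π` if `x i ≥ x j + x k`, `0` if some other side is at least the sum of the
remaining two, and otherwise the usual Euclidean angle `arccos((xⱼ²+x_k²−xᵢ²)/(2xⱼx_k))`. -/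
noncomputable def genAngle (x : Fin 3 → ℝ) (i : Fin 3) : ℝ :=
  if x (i + 1) + x (i + 2) ≤ x i then Real.pi
  else if x i + x (i + 2) ≤ x (i + 1) ∨ x i + x (i + 1) ≤ x (i + 2) then 0
  else Real.arccos
    ((x (i + 1) ^ 2 + x (i + 2) ^ 2 - x i ^ 2) / (2 * x (i + 1) * x (i + 2)))

/-- The three side lengths `e^{(l₁₂+l₃₄)/2}, e^{(l₁₃+l₂₄)/2}, e^{(l₁₄+l₂₃)/2}` of the
generalized Euclidean triangle associated to a length vector `l ∈ ℝ⁶`.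
Edge indices: `0 ↔ {1,2}, 1 ↔ {1,3}, 2 ↔ {1,4}, 3 ↔ {2,3}, 4 ↔ {2,4}, 5 ↔ {3,4}`,
so opposite pairs of edges are `(0,5), (1,4), (2,3)`. -/
noncomputable def triSides (l : Fin 6 → ℝ) (k : Fin 3) : ℝ :=
  if k.val = 0 then Real.exp ((l 0 + l 5) / 2)
  else if k.val = 1 then Real.exp ((l 1 + l 4) / 2)
  else Real.exp ((l 2 + l 3) / 2)

/-- The quad (pair of opposite edges) containing the edge `p`. -/
def quadIndex (p : Fin 6) : Fin 3 :=
  if p.val = 0 ∨ p.val = 5 then 0 else if p.val = 1 ∨ p.val = 4 then 1 else 2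

/-- The extended dihedral angle `α_p(l)` of the generalized decorated tetrahedron with
length vector `l ∈ ℝ⁶` at the edge `p`. -/
noncomputable def dihedral (l : Fin 6 → ℝ) (p : Fin 6) : ℝ :=
  genAngle (triSides l) (quadIndex p)

/-- The edge index in `Fin 6` of the edge `{i,j}` of the tetrahedron on vertices `Fin 4`
(junk value for `i = j`). -/
def edgeOf (i j : Fin 4) : Fin 6 :=
  if (i.val = 0 ∧ j.val = 1) ∨ (i.val = 1 ∧ j.val = 0) then 0
  else if (i.val = 0 ∧ j.val = 2) ∨ (i.val = 2 ∧ j.val = 0) then 1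
  else if (i.val = 0 ∧ j.val = 3) ∨ (i.val = 3 ∧ j.val = 0) then 2
  else if (i.val = 1 ∧ j.val = 2) ∨ (i.val = 2 ∧ j.val = 1) then 3
  else if (i.val = 1 ∧ j.val = 3) ∨ (i.val = 3 ∧ j.val = 1) then 4
  else 5

/-- The two endpoints of the edge `p` of the tetrahedron. -/
def endPts (p : Fin 6) : Fin 4 × Fin 4 :=
  if p.val = 0 then (0, 1) else if p.val = 1 then (0, 2) else if p.val = 2 then (0, 3)
  else if p.val = 3 then (1, 2) else if p.val = 4 then (1, 3) else (2, 3)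

/-- The Lobachevsky function `Λ(x) = −∫₀ˣ ln|2 sin t| dt`. -/
noncomputable def lob (x : ℝ) : ℝ := -∫ t in (0:ℝ)..x, Real.log |2 * Real.sin t|

/-- The volume of the generalized decorated tetrahedron with length vector `l`. -/
noncomputable def vol6 (l : Fin 6 → ℝ) : ℝ := (1 / 2 : ℝ) * ∑ p : Fin 6, lob (dihedral l p)

/-- The co-volume function `cov(l) = 2 vol(l) + Σ α_p(l) l_p` on `ℝ⁶`. -/
noncomputable def cov6 (l : Fin 6 → ℝ) : ℝ := 2 * vol6 l + ∑ p : Fin 6, dihedral l p * l p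

/-- `𝓛 ⊂ ℝ⁶`: length vectors of genuine decorated ideal hyperbolic tetrahedra, i.e. those
whose associated generalized Euclidean triangle satisfies the strict triangle inequalities. -/
def Ldom : Set (Fin 6 → ℝ) :=
  {l | ∀ i : Fin 3, triSides l i < triSides l (i + 1) + triSides l (i + 2)}

/-- The action of `w ∈ ℝ⁴` on `l ∈ ℝ⁶`: `(w + l)_{ij} = l_{ij} + wᵢ + wⱼ`. -/
def act (w : Fin 4 → ℝ) (l : Fin 6 → ℝ) : Fin 6 → ℝ :=
  fun p => l p + w (endPts p).1 + w (endPts p).2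

/-- `ℝ̂⁴ = {w + 0 : w ∈ ℝ⁴} ⊂ ℝ⁶`. -/
def hatR4 : Set (Fin 6 → ℝ) := {x | ∃ w : Fin 4 → ℝ, x = act w 0}

/-- `i, j, k, h` are pairwise distinct, i.e. `{i,j,k,h} = {1,2,3,4}`. -/
def Distinct4 (i j k h : Fin 4) : Prop :=
  i ≠ j ∧ i ≠ k ∧ i ≠ h ∧ j ≠ k ∧ j ≠ h ∧ k ≠ h

open MeasureTheory intervalIntegral

section ScalarTri
variable {A B C : ℝ}

lemma tri_sub (hA : 0 < A) (hB : 0 < B) (hC : 0 < C)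
    (t1 : A < B + C) (t2 : B < A + C) (t3 : C < A + B) :
    0 < (2*B*C)^2 - (B^2+C^2-A^2)^2 := by
  have h1 : 0 < (B+C)^2 - A^2 := by nlinarith
  have h2 : 0 < A^2 - (B-C)^2 := by nlinarith
  nlinarith [mul_pos h1 h2]

lemma tri_c_mem (hA : 0 < A) (hB : 0 < B) (hC : 0 < C)
    (t1 : A < B + C) (t2 : B < A + C) (t3 : C < A + B) :
    (B^2+C^2-A^2)/(2*B*C) ∈ Ioo (-1 : ℝ) 1 := by
  constructor
  · rw [lt_div_iff₀ (by positivity)]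
    nlinarith
  · rw [div_lt_one (by positivity)]
    nlinarith

lemma tri_sin_arccos (hA : 0 < A) (hB : 0 < B) (hC : 0 < C) :
    Real.sin (Real.arccos ((B^2+C^2-A^2)/(2*B*C))) =
      Real.sqrt ((2*B*C)^2 - (B^2+C^2-A^2)^2) / (2*B*C) := by
  rw [Real.sin_arccos]
  have h1 : 1 - ((B^2+C^2-A^2)/(2*B*C))^2
      = ((2*B*C)^2 - (B^2+C^2-A^2)^2) / (2*B*C)^2 := by
    field_simp
  rw [h1, Real.sqrt_div' _ (by positivity), Real.sqrt_sq (by positivity)]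

end ScalarTri

section ScalarTri2
variable {A B C : ℝ}

lemma tri_arccos_mem (hA : 0 < A) (hB : 0 < B) (hC : 0 < C)
    (t1 : A < B + C) (t2 : B < A + C) (t3 : C < A + B) :
    Real.arccos ((B^2+C^2-A^2)/(2*B*C)) ∈ Ioo 0 π := by
  obtain ⟨hm1, hm2⟩ := tri_c_mem hA hB hC t1 t2 t3
  refine ⟨Real.arccos_pos.2 hm2, lt_of_le_of_ne (Real.arccos_le_pi _) ?_⟩
  intro h
  have := Real.arccos_eq_pi.1 h
  linarith

lemma tri_log_two_sin (hA : 0 < A) (hB : 0 < B) (hC : 0 < C)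
    (t1 : A < B + C) (t2 : B < A + C) (t3 : C < A + B) :
    Real.log (2 * Real.sin (Real.arccos ((B^2+C^2-A^2)/(2*B*C)))) =
      Real.log (Real.sqrt ((2*B*C)^2 - (B^2+C^2-A^2)^2)) - Real.log B - Real.log C := by
  rw [tri_sin_arccos hA hB hC]
  have hN : 0 < (2*B*C)^2 - (B^2+C^2-A^2)^2 := tri_sub hA hB hC t1 t2 t3
  have hsN : 0 < Real.sqrt ((2*B*C)^2 - (B^2+C^2-A^2)^2) := Real.sqrt_pos.2 hN
  rw [show 2 * (Real.sqrt ((2*B*C)^2 - (B^2+C^2-A^2)^2) / (2*B*C))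
      = Real.sqrt ((2*B*C)^2 - (B^2+C^2-A^2)^2) / (B*C) by field_simp]
  rw [Real.log_div hsN.ne' (by positivity), Real.log_mul hB.ne' hC.ne']
  ring

end ScalarTri2


/-- helper: `log t - log (sin t)` extended by 0 at 0 -/
noncomputable def hAux (t : ℝ) : ℝ := if t = 0 then 0 else Real.log t - Real.log (Real.sin t)

lemma hAux_cont_at_pos {t : ℝ} (ht : 0 < t) (ht' : t < π) : ContinuousAt hAux t := by
  have hs : 0 < Real.sin t := Real.sin_pos_of_pos_of_lt_pi ht ht'
  have : ContinuousAt (fun u => Real.log u - Real.log (Real.sin u)) t :=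
    (Real.continuousAt_log ht.ne').sub
      ((Real.continuousAt_log hs.ne').comp (Real.continuous_sin.continuousAt))
  refine this.congr ?_
  filter_upwards [eventually_gt_nhds ht] with u hu
  simp [hAux, hu.ne']

lemma hAux_cont_at_zero : ContinuousAt hAux 0 := by
  have hslope : Tendsto (fun t : ℝ => Real.sin t / t) (nhdsWithin 0 {0}ᶜ) (nhds 1) := by
    have h := (Real.hasDerivAt_sin 0)
    rw [hasDerivAt_iff_tendsto_slope] at h
    rw [Real.cos_zero] at h
    exact h.congr (fun t => by rw [slope_def_field, Real.sin_zero, sub_zero, sub_zero])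
  have hlog : Tendsto (fun t : ℝ => Real.log (Real.sin t / t)) (nhdsWithin 0 {0}ᶜ)
      (nhds 0) := by
    have := (Real.continuousAt_log (by norm_num : (1:ℝ) ≠ 0)).tendsto.comp hslope
    simpa [Function.comp_def] using this
  rw [ContinuousAt, ← nhdsNE_sup_pure, tendsto_sup]
  constructor
  · have hmem : Ioo (-π) π ∈ nhdsWithin (0:ℝ) {0}ᶜ := by
      refine nhdsWithin_le_nhds (Ioo_mem_nhds (by linarith [Real.pi_pos]) Real.pi_pos)
    have : hAux =ᶠ[nhdsWithin (0:ℝ) {0}ᶜ] (fun t => -Real.log (Real.sin t / t)) := by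
      filter_upwards [self_mem_nhdsWithin, hmem] with u hu hu2
      have hu0 : u ≠ 0 := hu
      have hsin : Real.sin u ≠ 0 := by
        rw [Ne, Real.sin_eq_zero_iff_of_lt_of_lt hu2.1 hu2.2]; exact hu0
      unfold hAux
      rw [if_neg hu0, Real.log_div hsin hu0]
      ring
    rw [tendsto_congr' this]
    have : hAux 0 = 0 := by simp [hAux]
    rw [this]
    simpa using hlog.neg
  · have h0 : hAux 0 = 0 := by simp [hAux]
    simpa [h0] using tendsto_pure_nhds hAux 0

lemma hAux_contOn {x : ℝ} (hx : 0 < x) (hx' : x < π) : ContinuousOn hAux (Icc 0 x) := by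
  intro t ht
  rcases eq_or_lt_of_le ht.1 with h | h
  · exact h ▸ hAux_cont_at_zero.continuousWithinAt
  · exact (hAux_cont_at_pos h (lt_of_le_of_lt ht.2 hx')).continuousWithinAt

lemma integrableOn_log_sin {x : ℝ} (hx : 0 < x) (hx' : x < π) :
    IntegrableOn (fun t => Real.log (Real.sin t)) (Ioc 0 x) := by
  have hAuxInt : IntegrableOn hAux (Icc 0 x) :=
    (hAux_contOn hx hx').integrableOn_Icc
  set G : ℝ → ℝ := fun t => ∫ s in (0:ℝ)..t, hAux s with hG
  have hGcont : ContinuousOn G (Icc 0 x) := by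
    have := intervalIntegral.continuousOn_primitive_interval
      (f := hAux) (a := 0) (b := x) (μ := volume) (by rwa [uIcc_of_le hx.le])
    rwa [uIcc_of_le hx.le] at this
  set g : ℝ → ℝ := fun t => (t - t * Real.log t) + G t with hgdef
  have hgcont : ContinuousOn g (Icc 0 x) := by
    apply ContinuousOn.add _ hGcont
    exact (continuous_id.sub Real.continuous_mul_log).continuousOn
  have hderiv : ∀ t ∈ Ioo 0 x, HasDerivAt g (-Real.log (Real.sin t)) t := by
    intro t ht
    have h1 : HasDerivAt (fun t : ℝ => t - t * Real.log t) (1 - (Real.log t + 1)) t :=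
      (hasDerivAt_id t).sub (Real.hasDerivAt_mul_log ht.1.ne')
    have h2 : HasDerivAt G (hAux t) t := by
      apply intervalIntegral.integral_hasDerivAt_right
      · apply ContinuousOn.intervalIntegrable
        apply (hAux_contOn hx hx').mono
        rw [uIcc_of_le ht.1.le]
        exact Icc_subset_Icc le_rfl ht.2.le
      · have hm : Measurable hAux := by
          unfold hAux
          exact Measurable.ite (measurableSet_singleton 0) measurable_const
            (Real.measurable_log.sub (Real.measurable_log.comp Real.measurable_sin))
        exact hm.stronglyMeasurable.stronglyMeasurableAtFilter
      · exact hAux_cont_at_pos ht.1 (ht.2.trans hx')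
    have := h1.add h2
    refine this.congr_deriv ?_
    unfold hAux
    rw [if_neg ht.1.ne']
    ring
  have hnonneg : ∀ t ∈ Ioo 0 x, 0 ≤ -Real.log (Real.sin t) := by
    intro t ht
    simp only [neg_nonneg]
    exact Real.log_nonpos (Real.sin_nonneg_of_nonneg_of_le_pi ht.1.le
      (by linarith [ht.2])) (Real.sin_le_one t)
  have h2 := (integrableOn_deriv_of_nonneg hgcont hderiv hnonneg).neg
  simp only [Pi.neg_def, neg_neg] at h2
  exact h2

lemma intervalIntegrable_logAbs {x : ℝ} (hx : 0 < x) (hx' : x < π) :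
    IntervalIntegrable (fun t => Real.log |2 * Real.sin t|) volume 0 x := by
  rw [intervalIntegrable_iff, uIoc_of_le hx.le]
  have h1 : IntegrableOn (fun t => Real.log 2 + Real.log (Real.sin t)) (Ioc 0 x) :=
    (integrableOn_const (hs := measure_Ioc_lt_top.ne)).add (integrableOn_log_sin hx hx')
  apply h1.congr_fun _ measurableSet_Ioc
  intro t ht
  have hs : 0 < Real.sin t := Real.sin_pos_of_pos_of_lt_pi ht.1 (lt_of_le_of_lt ht.2 hx')
  show Real.log 2 + Real.log (Real.sin t) = Real.log |2 * Real.sin t|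
  rw [show |2 * Real.sin t| = 2 * Real.sin t from abs_of_pos (by linarith),
    Real.log_mul (by norm_num) hs.ne']

lemma lob_hasDerivAt {θ : ℝ} (h : θ ∈ Ioo 0 π) :
    HasDerivAt lob (-Real.log (2 * Real.sin θ)) θ := by
  have hs : 0 < Real.sin θ := Real.sin_pos_of_pos_of_lt_pi h.1 h.2
  have habs : ContinuousAt (fun t => Real.log |2 * Real.sin t|) θ := by
    exact ContinuousAt.log
      ((continuous_abs.comp (continuous_const.mul Real.continuous_sin)).continuousAt)
      (by positivity)
  have hmeas : Measurable (fun t => Real.log |2 * Real.sin t|) :=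
    Real.measurable_log.comp ((measurable_const.mul Real.measurable_sin).abs)
  have hder : HasDerivAt (fun u => ∫ t in (0:ℝ)..u, Real.log |2 * Real.sin t|)
      (Real.log |2 * Real.sin θ|) θ :=
    intervalIntegral.integral_hasDerivAt_right (intervalIntegrable_logAbs h.1 h.2)
      hmeas.stronglyMeasurable.stronglyMeasurableAtFilter habs
  have := hder.neg
  rw [show |2 * Real.sin θ| = 2 * Real.sin θ from abs_of_pos (by linarith)] at this
  exact this

lemma lob_contDiffOn : ContDiffOn ℝ ((⊤ : ℕ∞) : WithTop ℕ∞) lob (Ioo 0 π) := by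
  rw [contDiffOn_infty_iff_deriv_of_isOpen isOpen_Ioo]
  constructor
  · exact fun θ hθ => ((lob_hasDerivAt hθ).differentiableAt).differentiableWithinAt
  · have hcongr : ∀ θ ∈ Ioo 0 π, deriv lob θ = -Real.log (2 * Real.sin θ) :=
      fun θ hθ => (lob_hasDerivAt hθ).deriv
    apply ContDiffOn.congr _ hcongr
    intro θ hθ
    have hs : 0 < Real.sin θ := Real.sin_pos_of_pos_of_lt_pi hθ.1 hθ.2
    apply ContDiffWithinAt.neg
    exact (((Real.contDiffAt_log.mpr (by positivity)).comp θ
      ((contDiff_const.mul Real.contDiff_sin).contDiffAt)).contDiffWithinAt)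

-- ===== framework =====
abbrev E6 := Fin 6 → ℝ

def qa : Fin 3 → Fin 6 := ![0, 1, 2]
def qb : Fin 3 → Fin 6 := ![5, 4, 3]

noncomputable def U3 (k : Fin 3) : E6 →L[ℝ] ℝ :=
  (2⁻¹ : ℝ) • ((ContinuousLinearMap.proj (qa k) : E6 →L[ℝ] ℝ)
    + (ContinuousLinearMap.proj (qb k) : E6 →L[ℝ] ℝ))

noncomputable def MM (k : Fin 3) (l : E6) : ℝ := U3 k l

noncomputable def SS (k : Fin 3) (l : E6) : ℝ := Real.exp (MM k l)

lemma SS_pos (k : Fin 3) (l : E6) : 0 < SS k l := Real.exp_pos _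

lemma U3_apply (k : Fin 3) (x : E6) : U3 k x = 2⁻¹ * (x (qa k) + x (qb k)) := by
  simp [U3]; ring

lemma triSides_eq (l : E6) (k : Fin 3) : triSides l k = SS k l := by
  fin_cases k <;>
    simp only [triSides, SS, MM, U3_apply, qa, qb] <;> norm_num <;>
    (congr 1; ring)

lemma Fin3_arith (k : Fin 3) : k + 1 + 1 = k + 2 ∧ k + 1 + 2 = k ∧ k + 2 + 1 = k
    ∧ k + 2 + 2 = k + 1 := by
  fin_cases k <;> decide

noncomputable def cA (k : Fin 3) (l : E6) : ℝ :=
  (SS (k+1) l^2 + SS (k+2) l^2 - SS k l^2) / (2 * SS (k+1) l * SS (k+2) l)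

noncomputable def aK (k : Fin 3) (l : E6) : ℝ := Real.arccos (cA k l)

noncomputable def NN (l : E6) : ℝ :=
  (2 * SS 1 l * SS 2 l)^2 - (SS 1 l^2 + SS 2 l^2 - SS 0 l^2)^2

lemma NN_eq (l : E6) (k : Fin 3) :
    NN l = (2 * SS (k+1) l * SS (k+2) l)^2 - (SS (k+1) l^2 + SS (k+2) l^2 - SS k l^2)^2 := by
  fin_cases k
  · show NN l = (2 * SS 1 l * SS 2 l)^2 - (SS 1 l^2 + SS 2 l^2 - SS 0 l^2)^2
    rfl
  · show NN l = (2 * SS 2 l * SS 0 l)^2 - (SS 2 l^2 + SS 0 l^2 - SS 1 l^2)^2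
    simp only [NN]; ring
  · show NN l = (2 * SS 0 l * SS 1 l)^2 - (SS 0 l^2 + SS 1 l^2 - SS 2 l^2)^2
    simp only [NN]; ring

def Ldom' : Set (Fin 6 → ℝ) :=
  {l | ∀ i : Fin 3, triSides l i < triSides l (i + 1) + triSides l (i + 2)}

lemma Ldom'_tri {l : E6} (hl : l ∈ Ldom') (k : Fin 3) :
    SS k l < SS (k+1) l + SS (k+2) l ∧ SS (k+1) l < SS k l + SS (k+2) l ∧
      SS (k+2) l < SS k l + SS (k+1) l := by
  have h1 := hl k
  have h2 := hl (k+1)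
  have h3 := hl (k+2)
  obtain ⟨e1, e2, e3, e4⟩ := Fin3_arith k
  rw [triSides_eq, triSides_eq, triSides_eq] at h1 h2 h3
  rw [e1, e2] at h2
  rw [e3, e4] at h3
  exact ⟨h1, by linarith, by linarith⟩

lemma NN_pos {l : E6} (hl : l ∈ Ldom') : 0 < NN l := by
  obtain ⟨t1, t2, t3⟩ := Ldom'_tri hl 0
  show 0 < (2 * SS 1 l * SS 2 l)^2 - (SS 1 l^2 + SS 2 l^2 - SS 0 l^2)^2
  exact tri_sub (SS_pos 0 l) (SS_pos 1 l) (SS_pos 2 l) t1 t2 t3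

noncomputable def gK (k : Fin 3) (l : E6) : E6 →L[ℝ] ℝ :=
  (Real.sqrt (NN l))⁻¹ • ((SS k l^2) • (2 • U3 k - U3 (k+1) - U3 (k+2))
    + (SS (k+2) l^2 - SS (k+1) l^2) • (U3 (k+1) - U3 (k+2)))

lemma gK_apply (k : Fin 3) (l : E6) (x : E6) :
    gK k l x = (Real.sqrt (NN l))⁻¹ * ((SS k l^2) * (2 * U3 k x - U3 (k+1) x - U3 (k+2) x)
      + (SS (k+2) l^2 - SS (k+1) l^2) * (U3 (k+1) x - U3 (k+2) x)) := by
  simp [gK, mul_comm, two_smul]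
  ring

lemma hasFDerivAt_SS (k : Fin 3) (l : E6) : HasFDerivAt (SS k) (SS k l • U3 k) l :=
  (U3 k).hasFDerivAt.exp

lemma tri_sqrt_one_sub_sq {A B C : ℝ} (hB : 0 < B) (hC : 0 < C) :
    Real.sqrt (1 - ((B^2+C^2-A^2)/(2*B*C))^2)
      = Real.sqrt ((2*B*C)^2 - (B^2+C^2-A^2)^2) / (2*B*C) := by
  have h1 : 1 - ((B^2+C^2-A^2)/(2*B*C))^2
      = ((2*B*C)^2 - (B^2+C^2-A^2)^2) / (2*B*C)^2 := by
    field_simp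
  rw [h1, Real.sqrt_div' _ (by positivity), Real.sqrt_sq (by positivity)]

lemma hasFDerivAt_SSsq (j : Fin 3) (l : E6) :
    HasFDerivAt (fun l => SS j l ^ 2) ((2 * SS j l ^ 2) • U3 j) l := by
  have h2 : (fun l : E6 => SS j l ^ 2) = fun l => SS j l * SS j l := by
    funext y; ring
  rw [h2]
  have := (hasFDerivAt_SS j l).mul (hasFDerivAt_SS j l)
  refine this.congr_fderiv ?_
  ext x
  simp [two_smul, smul_smul]
  ring

lemma hasFDerivAt_aK {l : E6} (hl : l ∈ Ldom') (k : Fin 3) :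
    HasFDerivAt (aK k) (gK k l) l := by
  obtain ⟨t1, t2, t3⟩ := Ldom'_tri hl k
  have hA := SS_pos k l
  have hB := SS_pos (k+1) l
  have hC := SS_pos (k+2) l
  have hmem := tri_c_mem hA hB hC t1 t2 t3
  have hf : HasFDerivAt (fun l => SS (k+1) l^2 + SS (k+2) l^2 - SS k l^2)
      ((2 * SS (k+1) l ^ 2) • U3 (k+1) + (2 * SS (k+2) l ^ 2) • U3 (k+2)
        - (2 * SS k l ^ 2) • U3 k) l :=
    ((hasFDerivAt_SSsq (k+1) l).add (hasFDerivAt_SSsq (k+2) l)).sub (hasFDerivAt_SSsq k l)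
  have hg : HasFDerivAt (fun l => 2 * SS (k+1) l * SS (k+2) l)
      ((2 * SS (k+1) l) • (SS (k+2) l • U3 (k+2))
        + SS (k+2) l • ((2:ℝ) • (SS (k+1) l • U3 (k+1)))) l := by
    have h1 : HasFDerivAt (fun l => 2 * SS (k+1) l) ((2:ℝ) • (SS (k+1) l • U3 (k+1))) l :=
      (hasFDerivAt_SS (k+1) l).const_mul 2
    exact h1.mul (hasFDerivAt_SS (k+2) l)
  have hgne : 2 * SS (k+1) l * SS (k+2) l ≠ 0 := by positivity
  have hinv := (hasDerivAt_inv hgne).comp_hasFDerivAt l hg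
  have hquot := hf.mul hinv
  have hcA : HasFDerivAt (cA k)
      (((fun l => SS (k+1) l^2 + SS (k+2) l^2 - SS k l^2) l •
          ((-((2 * SS (k+1) l * SS (k+2) l) ^ 2)⁻¹) •
            ((2 * SS (k+1) l) • (SS (k+2) l • U3 (k+2))
              + SS (k+2) l • ((2:ℝ) • (SS (k+1) l • U3 (k+1)))))) +
        ((fun l => ((2 * SS (k+1) l * SS (k+2) l)⁻¹)) l •
          ((2 * SS (k+1) l ^ 2) • U3 (k+1) + (2 * SS (k+2) l ^ 2) • U3 (k+2)
            - (2 * SS k l ^ 2) • U3 k))) l := by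
    have heq : cA k = fun l => (SS (k+1) l^2 + SS (k+2) l^2 - SS k l^2)
        * (((fun y : ℝ => y⁻¹)) ∘ (fun l => 2 * SS (k+1) l * SS (k+2) l)) l := by
      funext y
      simp [cA, div_eq_mul_inv, Function.comp]
    rw [heq]
    exact hquot
  have harc := (Real.hasDerivAt_arccos (ne_of_gt hmem.1) (ne_of_lt hmem.2)).comp_hasFDerivAt l hcA
  have haK : aK k = Real.arccos ∘ cA k := rfl
  rw [haK]
  refine harc.congr_fderiv ?_
  have hNpos : 0 < NN l := NN_pos hl
  have hsN : (0:ℝ) < Real.sqrt (NN l) := Real.sqrt_pos.2 hNpos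
  have hsq' : Real.sqrt (1 - ((SS (k+1) l^2 + SS (k+2) l^2 - SS k l^2)
        / (2 * SS (k+1) l * SS (k+2) l))^2)
      = Real.sqrt (NN l) / (2 * SS (k+1) l * SS (k+2) l) := by
    rw [tri_sqrt_one_sub_sq hB hC, NN_eq l k]
  ext x
  simp only [gK, ContinuousLinearMap.smul_apply, ContinuousLinearMap.add_apply,
    ContinuousLinearMap.sub_apply, ContinuousLinearMap.coe_smul', Pi.smul_apply,
    smul_eq_mul, hsq', one_div]
  field_simp
  ring

@[simp] lemma qI0 : quadIndex 0 = 0 := rfl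
@[simp] lemma qI1 : quadIndex 1 = 1 := rfl
@[simp] lemma qI2 : quadIndex 2 = 2 := rfl
@[simp] lemma qI3 : quadIndex 3 = 2 := rfl
@[simp] lemma qI4 : quadIndex 4 = 1 := rfl
@[simp] lemma qI5 : quadIndex 5 = 0 := rfl

lemma gK_sum (l : E6) : gK 0 l + gK 1 l + gK 2 l = 0 := by
  ext x
  simp only [ContinuousLinearMap.add_apply, ContinuousLinearMap.zero_apply,
    gK_apply, show (0:Fin 3)+1 = 1 from rfl, show (0:Fin 3)+2 = 2 from rfl,
    show (1:Fin 3)+1 = 2 from rfl, show (1:Fin 3)+2 = 0 from rfl,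
    show (2:Fin 3)+1 = 0 from rfl, show (2:Fin 3)+2 = 1 from rfl]
  ring

lemma triSides_continuous (i : Fin 3) : Continuous fun l : E6 => triSides l i := by
  have : (fun l : E6 => triSides l i) = fun l => Real.exp (U3 i l) := by
    funext l; rw [triSides_eq]; rfl
  rw [this]
  exact Real.continuous_exp.comp (U3 i).continuous

lemma Ldom'_open : IsOpen Ldom' := by
  have : Ldom' = ⋂ i : Fin 3, {l : E6 | triSides l i < triSides l (i+1) + triSides l (i+2)} := by
    ext l; simp [Ldom', Set.mem_iInter]
  rw [this]
  exact isOpen_iInter_of_finite fun i => isOpen_lt (triSides_continuous i)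
    ((triSides_continuous (i+1)).add (triSides_continuous (i+2)))

lemma genAngle_eq {x : Fin 3 → ℝ} (h : ∀ i, x i < x (i+1) + x (i+2)) (i : Fin 3) :
    genAngle x i = Real.arccos ((x (i+1)^2 + x (i+2)^2 - x i^2)/(2 * x (i+1) * x (i+2))) := by
  obtain ⟨e1, e2, e3, e4⟩ := Fin3_arith i
  have h1 := h i
  have h2 := h (i+1)
  have h3 := h (i+2)
  rw [e1, e2] at h2
  rw [e3, e4] at h3
  unfold genAngle
  rw [if_neg (not_le.2 h1), if_neg (by push_neg; exact ⟨by linarith, by linarith⟩)]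

lemma dihedral_eq {l : E6} (hl : l ∈ Ldom') (p : Fin 6) :
    dihedral l p = aK (quadIndex p) l := by
  rw [dihedral, genAngle_eq hl, aK, cA]
  simp only [triSides_eq]

lemma aK_mem {l : E6} (hl : l ∈ Ldom') (k : Fin 3) : aK k l ∈ Ioo 0 π := by
  obtain ⟨t1, t2, t3⟩ := Ldom'_tri hl k
  exact tri_arccos_mem (SS_pos k l) (SS_pos (k+1) l) (SS_pos (k+2) l) t1 t2 t3

lemma log_SS (k : Fin 3) (l : E6) : Real.log (SS k l) = MM k l := Real.log_exp _

lemma log_two_sin_aK {l : E6} (hl : l ∈ Ldom') (k : Fin 3) :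
    Real.log (2 * Real.sin (aK k l))
      = Real.log (Real.sqrt (NN l)) - MM (k+1) l - MM (k+2) l := by
  obtain ⟨t1, t2, t3⟩ := Ldom'_tri hl k
  have h := tri_log_two_sin (SS_pos k l) (SS_pos (k+1) l) (SS_pos (k+2) l) t1 t2 t3
  rw [aK, cA]
  rw [h, ← NN_eq l k, log_SS, log_SS]

lemma MM_apply (k : Fin 3) (l : E6) : MM k l = 2⁻¹ * (l (qa k) + l (qb k)) := U3_apply k l

noncomputable def Phi (l : E6) : E6 →L[ℝ] ℝ :=
  ∑ p : Fin 6, aK (quadIndex p) l • (ContinuousLinearMap.proj p : E6 →L[ℝ] ℝ)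

noncomputable def covNice (l : E6) : ℝ :=
  (∑ k : Fin 3, 2 * lob (aK k l)) + ∑ p : Fin 6, aK (quadIndex p) l * l p

lemma cov6_eq_covNice {l : E6} (hl : l ∈ Ldom') : cov6 l = covNice l := by
  unfold cov6 vol6 covNice
  simp only [dihedral_eq hl]
  rw [Fin.sum_univ_six, Fin.sum_univ_six, Fin.sum_univ_three]
  simp only [qI0, qI1, qI2, qI3, qI4, qI5]
  ring

lemma hasFDerivAt_cov6 {l : E6} (hl : l ∈ Ldom') : HasFDerivAt cov6 (Phi l) l := by
  have hlobk : ∀ k : Fin 3, HasFDerivAt (fun l' => 2 * lob (aK k l'))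
      ((2 * (-Real.log (2 * Real.sin (aK k l)))) • gK k l) l := by
    intro k
    have h1 := (lob_hasDerivAt (aK_mem hl k)).comp_hasFDerivAt l (hasFDerivAt_aK hl k)
    have h2 := h1.const_mul (2:ℝ)
    refine h2.congr_fderiv ?_
    ext x
    simp only [ContinuousLinearMap.smul_apply, smul_eq_mul]
    ring
  have hsum1 : HasFDerivAt (fun l' => ∑ k : Fin 3, 2 * lob (aK k l'))
      (∑ k : Fin 3, (2 * (-Real.log (2 * Real.sin (aK k l)))) • gK k l) l :=
    HasFDerivAt.fun_sum (fun k _ => hlobk k)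
  have hterm2 : ∀ p : Fin 6, HasFDerivAt (fun l' => aK (quadIndex p) l' * l' p)
      (aK (quadIndex p) l • (ContinuousLinearMap.proj p : E6 →L[ℝ] ℝ)
        + l p • gK (quadIndex p) l) l := by
    intro p
    exact (hasFDerivAt_aK hl (quadIndex p)).mul
      ((ContinuousLinearMap.proj p : E6 →L[ℝ] ℝ).hasFDerivAt)
  have hsum2 : HasFDerivAt (fun l' => ∑ p : Fin 6, aK (quadIndex p) l' * l' p)
      (∑ p : Fin 6, (aK (quadIndex p) l • (ContinuousLinearMap.proj p : E6 →L[ℝ] ℝ)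
        + l p • gK (quadIndex p) l)) l :=
    HasFDerivAt.fun_sum (fun p _ => hterm2 p)
  have hNice := hsum1.add hsum2
  have hev : cov6 =ᶠ[nhds l] covNice := by
    filter_upwards [Ldom'_open.mem_nhds hl] with l' hl'
    exact cov6_eq_covNice hl'
  have hD : (∑ k : Fin 3, (2 * (-Real.log (2 * Real.sin (aK k l)))) • gK k l)
      + (∑ p : Fin 6, (aK (quadIndex p) l • (ContinuousLinearMap.proj p : E6 →L[ℝ] ℝ)
        + l p • gK (quadIndex p) l)) = Phi l := by
    ext x
    have hg0 : gK 0 l x + gK 1 l x + gK 2 l x = 0 := by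
      simpa using ContinuousLinearMap.ext_iff.1 (gK_sum l) x
    have hMM0 : MM 0 l = 2⁻¹ * (l 0 + l 5) := MM_apply 0 l
    have hMM1 : MM 1 l = 2⁻¹ * (l 1 + l 4) := MM_apply 1 l
    have hMM2 : MM 2 l = 2⁻¹ * (l 2 + l 3) := MM_apply 2 l
    simp only [Phi, ContinuousLinearMap.add_apply, ContinuousLinearMap.sum_apply,
      ContinuousLinearMap.smul_apply, ContinuousLinearMap.proj_apply, smul_eq_mul,
      Fin.sum_univ_six, qI0, qI1, qI2, qI3, qI4, qI5, Fin.sum_univ_three,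
      log_two_sin_aK hl, show (0:Fin 3)+1 = 1 from rfl, show (0:Fin 3)+2 = 2 from rfl,
      show (1:Fin 3)+1 = 2 from rfl, show (1:Fin 3)+2 = 0 from rfl,
      show (2:Fin 3)+1 = 0 from rfl, show (2:Fin 3)+2 = 1 from rfl]
    linear_combination (2*(MM 0 l + MM 1 l + MM 2 l)
        - 2*Real.log (Real.sqrt (NN l))) * hg0
      - 2*(gK 0 l x)*hMM0 - 2*(gK 1 l x)*hMM1 - 2*(gK 2 l x)*hMM2
  rw [← hD]
  exact hNice.congr_of_eventuallyEq hev

noncomputable def Hess (l : E6) : E6 →L[ℝ] E6 →L[ℝ] ℝ :=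
  ∑ p : Fin 6, (gK (quadIndex p) l).smulRight (ContinuousLinearMap.proj p : E6 →L[ℝ] ℝ)

lemma Hess_apply (l : E6) (x y : E6) :
    Hess l x y = ∑ p : Fin 6, gK (quadIndex p) l x * y p := by
  simp [Hess, ContinuousLinearMap.sum_apply, ContinuousLinearMap.smulRight_apply,
    ContinuousLinearMap.proj_apply, smul_eq_mul]

lemma hasFDerivAt_Phi {l : E6} (hl : l ∈ Ldom') : HasFDerivAt Phi (Hess l) l := by
  have h : ∀ p : Fin 6, HasFDerivAt
      (fun l' => aK (quadIndex p) l' • (ContinuousLinearMap.proj p : E6 →L[ℝ] ℝ))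
      ((gK (quadIndex p) l).smulRight (ContinuousLinearMap.proj p : E6 →L[ℝ] ℝ)) l := by
    intro p
    have := (hasFDerivAt_aK hl (quadIndex p)).smul
      (hasFDerivAt_const (ContinuousLinearMap.proj p : E6 →L[ℝ] ℝ) l)
    rw [smul_zero, zero_add] at this
    exact this
  exact HasFDerivAt.fun_sum (fun p _ => h p)

lemma fderiv2_eq {l : E6} (hl : l ∈ Ldom') : fderiv ℝ (fderiv ℝ cov6) l = Hess l := by
  have h1 : fderiv ℝ cov6 =ᶠ[nhds l] Phi := by
    filter_upwards [Ldom'_open.mem_nhds hl] with l' hl'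
    exact (hasFDerivAt_cov6 hl').fderiv
  rw [h1.fderiv_eq, (hasFDerivAt_Phi hl).fderiv]

lemma lin_solve {A B C v1 v2 : ℝ} (hN : 0 < (2*A*B)^2 - (A^2+B^2-C^2)^2)
    (h0 : 2*A^2*v1 + (C^2-B^2-A^2)*v2 = 0)
    (h1 : (C^2-A^2-B^2)*v1 + 2*B^2*v2 = 0) : v1 = 0 ∧ v2 = 0 := by
  have hv1 : ((2*A*B)^2 - (A^2+B^2-C^2)^2) * v1 = 0 := by
    linear_combination (2*B^2)*h0 - (C^2-B^2-A^2)*h1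
  have hv2 : ((2*A*B)^2 - (A^2+B^2-C^2)^2) * v2 = 0 := by
    linear_combination (2*A^2)*h1 - (C^2-A^2-B^2)*h0
  constructor
  · rcases mul_eq_zero.1 hv1 with h | h
    · exact absurd h hN.ne'
    · exact h
  · rcases mul_eq_zero.1 hv2 with h | h
    · exact absurd h hN.ne'
    · exact h

lemma quad_pos {A B C v1 v2 : ℝ} (hA : 0 < A)
    (hN : 0 < (2*A*B)^2 - (A^2+B^2-C^2)^2) (hv : ¬(v1 = 0 ∧ v2 = 0)) :
    0 < 2*A^2*v1^2 + 2*B^2*v2^2 + 2*(C^2-A^2-B^2)*v1*v2 := by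
  rcases eq_or_ne v2 0 with h | h
  · subst h
    have hv1 : v1 ≠ 0 := by
      intro h1; exact hv ⟨h1, rfl⟩
    have : 0 < v1^2 := by positivity
    nlinarith
  · have h2 : 0 < v2^2 := by positivity
    nlinarith [sq_nonneg (2*A^2*v1 + (C^2-A^2-B^2)*v2), mul_pos hN h2, mul_pos hA hA]

@[simp] lemma eP0 : endPts 0 = (0, 1) := rfl
@[simp] lemma eP1 : endPts 1 = (0, 2) := rfl
@[simp] lemma eP2 : endPts 2 = (0, 3) := rfl
@[simp] lemma eP3 : endPts 3 = (1, 2) := rfl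
@[simp] lemma eP4 : endPts 4 = (1, 3) := rfl
@[simp] lemma eP5 : endPts 5 = (2, 3) := rfl

/-- membership in hatR4 from the two linear conditions -/
lemma mem_hatR4_of_eqs {x : E6} (e1 : x 0 + x 5 = x 2 + x 3) (e2 : x 1 + x 4 = x 2 + x 3) :
    x ∈ hatR4 := by
  refine ⟨![(x 0 + x 1 - x 3)/2, (x 0 - x 1 + x 3)/2, (-x 0 + x 1 + x 3)/2,
    x 2 - (x 0 + x 1 - x 3)/2], ?_⟩
  funext p
  fin_cases p <;>
    simp [act] <;> ring_nf <;> linarith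

lemma hatR4_u_eq {x : E6} (hx : x ∈ hatR4) :
    U3 0 x = U3 1 x ∧ U3 1 x = U3 2 x := by
  obtain ⟨w, rfl⟩ := hx
  constructor <;>
    (simp [U3_apply, act, qa, qb]; ring)

@[simp] lemma qa0 : qa 0 = 0 := rfl
@[simp] lemma qa1 : qa 1 = 1 := rfl
@[simp] lemma qa2 : qa 2 = 2 := rfl
@[simp] lemma qb0 : qb 0 = 5 := rfl
@[simp] lemma qb1 : qb 1 = 4 := rfl
@[simp] lemma qb2 : qb 2 = 3 := rfl

lemma sqrtNN_pos {l : E6} (hl : l ∈ Ldom') : 0 < Real.sqrt (NN l) :=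
  Real.sqrt_pos.2 (NN_pos hl)

lemma gK_vanish {l : E6} (hl : l ∈ Ldom') {x : E6}
    (hx : U3 0 x = U3 1 x) (hx' : U3 1 x = U3 2 x) (k : Fin 3) : gK k l x = 0 := by
  fin_cases k
  · show gK 0 l x = 0
    rw [gK_apply]
    simp only [show (0:Fin 3)+1 = 1 from rfl, show (0:Fin 3)+2 = 2 from rfl]
    rw [hx, hx']; ring
  · show gK 1 l x = 0
    rw [gK_apply]
    simp only [show (1:Fin 3)+1 = 2 from rfl, show (1:Fin 3)+2 = 0 from rfl]
    rw [hx, hx']; ring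
  · show gK 2 l x = 0
    rw [gK_apply]
    simp only [show (2:Fin 3)+1 = 0 from rfl, show (2:Fin 3)+2 = 1 from rfl]
    rw [hx, hx']; ring

lemma kernel_iff {l : E6} (hl : l ∈ Ldom') (x : E6) :
    (∀ y, Hess l x y = 0) ↔ x ∈ hatR4 := by
  constructor
  · intro h
    have hp : ∀ p : Fin 6, gK (quadIndex p) l x = 0 := by
      intro p
      have h2 := h (Pi.single p 1)
      rw [Hess_apply] at h2
      simpa [Pi.single_apply, mul_ite, Finset.sum_ite_eq'] using h2
    have hsNne : (Real.sqrt (NN l))⁻¹ ≠ 0 := inv_ne_zero (sqrtNN_pos hl).ne'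
    have hW : ∀ k : Fin 3, (SS k l^2) * (2 * U3 k x - U3 (k+1) x - U3 (k+2) x)
        + (SS (k+2) l^2 - SS (k+1) l^2) * (U3 (k+1) x - U3 (k+2) x) = 0 := by
      intro k
      have h3 : gK k l x = 0 := by
        fin_cases k
        · show gK 0 l x = 0; simpa using hp 0
        · show gK 1 l x = 0; simpa using hp 1
        · show gK 2 l x = 0; simpa using hp 3
      rw [gK_apply] at h3
      rcases mul_eq_zero.1 h3 with h4 | h4
      · exact absurd h4 hsNne
      · exact h4
    have hW0 := hW 0
    have hW1 := hW 1
    simp only [show (0:Fin 3)+1 = 1 from rfl, show (0:Fin 3)+2 = 2 from rfl,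
      show (1:Fin 3)+1 = 2 from rfl, show (1:Fin 3)+2 = 0 from rfl] at hW0 hW1
    have hN2 : 0 < (2 * SS 0 l * SS 1 l)^2 - (SS 0 l^2 + SS 1 l^2 - SS 2 l^2)^2 := by
      have := NN_pos hl
      rwa [NN_eq l 2] at this
    obtain ⟨hv1, hv2⟩ := lin_solve (v1 := U3 0 x - U3 2 x) (v2 := U3 1 x - U3 2 x) hN2
      (by linear_combination hW0) (by linear_combination hW1)
    have e0 : U3 0 x = U3 2 x := by linarith
    have e1 : U3 1 x = U3 2 x := by linarith
    rw [U3_apply, U3_apply] at e0 e1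
    simp only [qa0, qa1, qa2, qb0, qb1, qb2] at e0 e1
    exact mem_hatR4_of_eqs (by linarith) (by linarith)
  · intro hx y
    obtain ⟨e1, e2⟩ := hatR4_u_eq hx
    rw [Hess_apply]
    apply Finset.sum_eq_zero
    intro p _
    rw [gK_vanish hl e1 e2]
    ring

lemma Hess_pos {l : E6} (hl : l ∈ Ldom') {x : E6} (hx : x ∉ hatR4) :
    0 < Hess l x x := by
  have key : Hess l x x = 2 * (Real.sqrt (NN l))⁻¹ *
      (2 * SS 0 l^2 * (U3 0 x - U3 2 x)^2 + 2 * SS 1 l^2 * (U3 1 x - U3 2 x)^2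
        + 2 * (SS 2 l^2 - SS 0 l^2 - SS 1 l^2) * (U3 0 x - U3 2 x) * (U3 1 x - U3 2 x)) := by
    rw [Hess_apply, Fin.sum_univ_six]
    simp only [qI0, qI1, qI2, qI3, qI4, qI5, gK_apply,
      show (0:Fin 3)+1 = 1 from rfl, show (0:Fin 3)+2 = 2 from rfl,
      show (1:Fin 3)+1 = 2 from rfl, show (1:Fin 3)+2 = 0 from rfl,
      show (2:Fin 3)+1 = 0 from rfl, show (2:Fin 3)+2 = 1 from rfl,
      U3_apply, qa0, qa1, qa2, qb0, qb1, qb2]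
    ring
  rw [key]
  have hN2 : 0 < (2 * SS 0 l * SS 1 l)^2 - (SS 0 l^2 + SS 1 l^2 - SS 2 l^2)^2 := by
    have := NN_pos hl
    rwa [NN_eq l 2] at this
  have hv : ¬((U3 0 x - U3 2 x) = 0 ∧ (U3 1 x - U3 2 x) = 0) := by
    rintro ⟨h1, h2⟩
    apply hx
    have e0 : U3 0 x = U3 2 x := by linarith
    have e1 : U3 1 x = U3 2 x := by linarith
    rw [U3_apply, U3_apply] at e0 e1
    simp only [qa0, qa1, qa2, qb0, qb1, qb2] at e0 e1
    exact mem_hatR4_of_eqs (by linarith) (by linarith)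
  have := quad_pos (SS_pos 0 l) hN2 hv
  have h2 : 0 < (Real.sqrt (NN l))⁻¹ := inv_pos.2 (sqrtNN_pos hl)
  calc (0:ℝ) < 2 * (Real.sqrt (NN l))⁻¹ *
      (2*(SS 0 l)^2*(U3 0 x - U3 2 x)^2 + 2*(SS 1 l)^2*(U3 1 x - U3 2 x)^2
        + 2*((SS 2 l)^2-(SS 0 l)^2-(SS 1 l)^2)*(U3 0 x - U3 2 x)*(U3 1 x - U3 2 x)) := by
        apply mul_pos (by positivity) this
    _ = _ := by ring

lemma contDiffAt_aK {l : E6} (hl : l ∈ Ldom') (k : Fin 3) {n : WithTop ℕ∞} :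
    ContDiffAt ℝ n (aK k) l := by
  obtain ⟨t1, t2, t3⟩ := Ldom'_tri hl k
  have hmem := tri_c_mem (SS_pos k l) (SS_pos (k+1) l) (SS_pos (k+2) l) t1 t2 t3
  have hSS : ∀ j : Fin 3, ContDiff ℝ n (SS j) := fun j =>
    Real.contDiff_exp.comp (U3 j).contDiff
  have hnum : ContDiff ℝ n (fun l => SS (k+1) l^2 + SS (k+2) l^2 - SS k l^2) :=
    (((hSS (k+1)).pow 2).add ((hSS (k+2)).pow 2)).sub ((hSS k).pow 2)
  have hden : ContDiff ℝ n (fun l => 2 * SS (k+1) l * SS (k+2) l) :=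
    (contDiff_const.mul (hSS (k+1))).mul (hSS (k+2))
  have hcA : ContDiff ℝ n (cA k) := hnum.div hden (fun l => by
    have := SS_pos (k+1) l
    have := SS_pos (k+2) l
    positivity)
  exact (Real.contDiffAt_arccos (ne_of_gt hmem.1) (ne_of_lt hmem.2)).comp l hcA.contDiffAt

lemma contDiffOn_cov6 : ContDiffOn ℝ ((⊤ : ℕ∞) : WithTop ℕ∞) cov6 Ldom' := by
  intro l hl
  have hnice : ContDiffAt ℝ ((⊤ : ℕ∞) : WithTop ℕ∞) covNice l := by
    apply ContDiffAt.add
    · apply ContDiffAt.sum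
      intro k _
      exact contDiffAt_const.mul
        ((lob_contDiffOn.contDiffAt (isOpen_Ioo.mem_nhds (aK_mem hl k))).comp l
          (contDiffAt_aK hl k))
    · apply ContDiffAt.sum
      intro p _
      exact (contDiffAt_aK hl (quadIndex p)).mul
        ((ContinuousLinearMap.proj p : E6 →L[ℝ] ℝ).contDiff.contDiffAt)
  have hev : cov6 =ᶠ[nhds l] covNice := by
    filter_upwards [Ldom'_open.mem_nhds hl] with l' hl'
    exact cov6_eq_covNice hl'
  exact (hnice.congr_of_eventuallyEq hev).contDiffWithinAt

noncomputable def actL : (Fin 4 → ℝ) →ₗ[ℝ] E6 where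
  toFun w := fun p => w (endPts p).1 + w (endPts p).2
  map_add' a b := by funext p; simp [Pi.add_apply]; ring
  map_smul' c a := by funext p; simp [Pi.smul_apply, smul_eq_mul]; ring

lemma hatR4_eq_range : hatR4 = ↑(LinearMap.range actL) := by
  ext x
  constructor
  · rintro ⟨w, rfl⟩
    exact ⟨w, by funext p; simp [act, actL]⟩
  · rintro ⟨w, rfl⟩
    exact ⟨w, by funext p; simp [act, actL]⟩

lemma actL_inj : Function.Injective actL := by
  intro a b hab
  have h : ∀ p : Fin 6, a (endPts p).1 + a (endPts p).2 = b (endPts p).1 + b (endPts p).2 :=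
    fun p => congrFun hab p
  have h0 := h 0
  have h1 := h 1
  have h2 := h 2
  have h3 := h 3
  simp only [eP0, eP1, eP2, eP3] at h0 h1 h2 h3
  funext i
  fin_cases i <;> simp <;> linarith

lemma finrank_span_hatR4 : Module.finrank ℝ (Submodule.span ℝ hatR4) = 4 := by
  rw [hatR4_eq_range, Submodule.span_eq (LinearMap.range actL),
    LinearMap.finrank_range_of_inj actL_inj, Module.finrank_fin_fun]


/-- `cov` is smooth on `𝓛`; `ℝ̂⁴` is a `4`-dimensional subspace of `ℝ⁶`; for
every `l ∈ 𝓛`, the kernel of the Hessian of `cov` at `l` is exactly `ℝ̂⁴`, and the Hessian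
is positive definite on the orthogonal complement of `ℝ̂⁴` (for the standard inner
product). -/
theorem cov6_smooth_hessian_kernel :
    ContDiffOn ℝ (⊤ : ℕ∞) cov6 Ldom ∧
    Module.finrank ℝ (Submodule.span ℝ hatR4) = 4 ∧
    ∀ l ∈ Ldom,
      ({x : Fin 6 → ℝ | ∀ y : Fin 6 → ℝ, fderiv ℝ (fderiv ℝ cov6) l x y = 0} = hatR4) ∧
      (∀ x : Fin 6 → ℝ, x ≠ 0 → (∀ v ∈ hatR4, ∑ p : Fin 6, x p * v p = 0) →
        0 < fderiv ℝ (fderiv ℝ cov6) l x x) := by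
  have hLL : Ldom = Ldom' := rfl
  refine ⟨contDiffOn_cov6, finrank_span_hatR4, ?_⟩
  intro l hl
  rw [hLL] at hl
  constructor
  · ext x
    simp only [Set.mem_setOf_eq, fderiv2_eq hl]
    exact kernel_iff hl x
  · intro x hx hperp
    have hx4 : x ∉ hatR4 := by
      intro hmem
      apply hx
      have hsum := hperp x hmem
      have hsq : ∑ p : Fin 6, (x p)^2 = 0 := by
        rw [← hsum]
        exact Finset.sum_congr rfl fun p _ => sq (x p)
      funext p
      have h := (Finset.sum_eq_zero_iff_of_nonneg (fun p _ => sq_nonneg (x p))).1 hsq p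
        (Finset.mem_univ p)
      exact pow_eq_zero_iff two_ne_zero |>.1 h
    rw [fderiv2_eq hl]
    exact Hess_pos hl hx4
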